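/- Suppose p_max < 1 and every B ∈ 𝓑 satisfies Σ_{A ∈ Γ(B)} p(A) ≤ 1/4. Then the Shearer criterion is satisfied, and α(B) ≤ 4 for every non-isolated B ∈ 𝓑. -/

import Mathlib

open scoped ENNReal BigOperators Classical

noncomputable section

variable {β : Type*}

/-- A set of bad-events is stable if no two distinct members are dependent. -/
def IsStable (dep : β → β → Prop) (I : Finset β) : Prop :=
  ∀ A ∈ I, ∀ B ∈ I, A ≠ B → ¬ dep A B

/-- Inclusive neighborhood Γ̄(B) = Γ(B) ∪ {B}. -/
def inclNbhd [Fintype β] (dep : β → β → Prop) (B : β) : Finset β :=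
  Finset.univ.filter fun A => A = B ∨ dep A B

/-- Neighborhood Γ(B). -/
def nbhd [Fintype β] (dep : β → β → Prop) (B : β) : Finset β :=
  Finset.univ.filter fun A => A ≠ B ∧ dep A B

/-- stab(I): all stable subsets of ⋃_{B ∈ I} Γ̄(B). -/
def stab [Fintype β] (dep : β → β → Prop) (I : Finset β) : Finset (Finset β) :=
  Finset.univ.filter fun J => IsStable dep J ∧ J ⊆ I.biUnion (inclNbhd dep)

/-- A stable-set sequence rooted at `I`. -/
structure StableSeq [Fintype β] (dep : β → β → Prop) (I : Finset β) where
  seq : ℕ → Finset β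
  root : seq 0 = I
  stable : ∀ i, IsStable dep (seq i)
  step : ∀ i, seq (i + 1) ∈ stab dep (seq i)
  fin : ∃ ℓ, seq ℓ = ∅

/-- The depth of a stable-set sequence: the least ℓ with S_ℓ = ∅. -/
def StableSeq.depth [Fintype β] {dep : β → β → Prop} {I : Finset β}
    (S : StableSeq dep I) : ℕ :=
  Nat.find S.fin

/-- The weight Π_i p(S_i) of a stable-set sequence. -/
def StableSeq.weight [Fintype β] {dep : β → β → Prop} {I : Finset β}
    (p : β → ℝ≥0∞) (S : StableSeq dep I) : ℝ≥0∞ :=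
  ∏ i ∈ Finset.range S.depth, ∏ B ∈ S.seq i, p B

/-- μ(I): total weight of all stable-set sequences rooted at I. -/
def mu [Fintype β] (dep : β → β → Prop) (p : β → ℝ≥0∞) (I : Finset β) : ℝ≥0∞ :=
  ∑' S : StableSeq dep I, S.weight p

/-- μ^{(h)}(I): total weight of stable-set sequences rooted at I of depth ≤ h. -/
def muD [Fintype β] (dep : β → β → Prop) (p : β → ℝ≥0∞) (I : Finset β) (h : ℕ) : ℝ≥0∞ :=
  ∑' S : {S : StableSeq dep I // S.depth ≤ h}, S.1.weight p

/-- α(B) = Σ_{J ∈ stab(B)} μ(J). -/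
def alphaB [Fintype β] (dep : β → β → Prop) (p : β → ℝ≥0∞) (B : β) : ℝ≥0∞ :=
  ∑ J ∈ stab dep {B}, mu dep p J

/-- The Shearer criterion: μ(B) < ∞ for all bad-events B. -/
def ShearerCrit [Fintype β] (dep : β → β → Prop) (p : β → ℝ≥0∞) : Prop :=
  ∀ B : β, mu dep p {B} < ⊤

/-!
Splitting off the root of a stable-set sequence gives
`μ⁽ʰ⁺¹⁾(I) ≤ p(I) · Σ_{J ∈ stab(I)} μ⁽ʰ⁾(J)`, and enlarging `stab(I)` to all subsets of
`⋃_{B ∈ I} Γ̄(B)` turns the sum of products into a product. Hence any weights `c` with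
`p(B) ∏_{A ∈ Γ̄(B)} (1 + c(A)) ≤ c(B)` give `μ(I) ≤ ∏_{B ∈ I} c(B)` by induction on the depth.
For `c = x / (1 - x)` this is the asymmetric criterion `p(B) ≤ x(B) ∏_{A ∈ Γ(B)} (1 - x(A))`.
Take `x(B) = 2 p(B)` for non-isolated `B` and `x(B) = p(B)` for isolated `B`: then
`Σ_{A ∈ Γ(B)} x(A) ≤ 1/2`, so `∏_{A ∈ Γ(B)} (1 - x(A)) ≥ 1/2`, which is exactly what the
criterion needs, and it also bounds `α(B) ≤ ∏_{A ∈ Γ̄(B)} (1 - x(A))⁻¹` by `2 · 2`.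
-/

theorem Finset.prod_biUnion_le_of_one_le {ι κ M : Type*} [DecidableEq ι] [CommMonoid M]
    [PartialOrder M] [IsOrderedMonoid M] {f : ι → M} (hf : ∀ i, 1 ≤ f i) (s : Finset κ)
    (t : κ → Finset ι) : ∏ i ∈ s.biUnion t, f i ≤ ∏ k ∈ s, ∏ i ∈ t k, f i := by
  induction s using Finset.cons_induction with
  | empty => simp
  | cons k s hk ih =>
    rw [Finset.cons_eq_insert, Finset.biUnion_insert, Finset.prod_insert hk]
    calc ∏ i ∈ t k ∪ s.biUnion t, f i
        ≤ (∏ i ∈ t k ∪ s.biUnion t, f i) * ∏ i ∈ t k ∩ s.biUnion t, f i :=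
          le_mul_of_one_le_right' (Finset.one_le_prod' fun i _ => hf i)
      _ = (∏ i ∈ t k, f i) * ∏ i ∈ s.biUnion t, f i := Finset.prod_union_inter
      _ ≤ _ := by gcongr

theorem ENNReal.one_sub_sum_le_prod_one_sub {ι : Type*} (s : Finset ι) {x : ι → ℝ≥0∞}
    (hx : ∀ i ∈ s, x i ≤ 1) : 1 - ∑ i ∈ s, x i ≤ ∏ i ∈ s, (1 - x i) := by
  induction s using Finset.cons_induction with
  | empty => simp
  | cons k s hk ih =>
    rw [Finset.sum_cons, Finset.prod_cons]
    have hxk : x k ≤ 1 := hx k (Finset.mem_cons_self k s)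
    set S := ∑ i ∈ s, x i
    calc 1 - (x k + S) ≤ (1 - x k) * (1 - S) := by
          rw [tsub_le_iff_right]
          calc (1 : ℝ≥0∞) ≤ ((1 - x k) + x k) * (1 - S) + S := by
                rw [tsub_add_cancel_of_le hxk, one_mul]; exact le_tsub_add
            _ ≤ (1 - x k) * (1 - S) + x k * 1 + S := by
                rw [add_mul]; gcongr; exact tsub_le_self
            _ = (1 - x k) * (1 - S) + (x k + S) := by rw [mul_one, add_assoc]
      _ ≤ (1 - x k) * ∏ i ∈ s, (1 - x i) := by
          gcongr; exact ih fun i hi => hx i (Finset.mem_cons_of_mem hi)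

theorem ENNReal.mul_inv_one_sub_add_one {x : ℝ≥0∞} (hx : x < 1) :
    x * (1 - x)⁻¹ + 1 = (1 - x)⁻¹ := by
  have h0 : 1 - x ≠ 0 := (tsub_pos_of_lt hx).ne'
  have htop : 1 - x ≠ ⊤ := (tsub_le_self.trans_lt ENNReal.one_lt_top).ne
  calc x * (1 - x)⁻¹ + 1 = x * (1 - x)⁻¹ + (1 - x) * (1 - x)⁻¹ := by
        rw [ENNReal.mul_inv_cancel h0 htop]
    _ = (1 - x)⁻¹ := by rw [← add_mul, add_tsub_cancel_of_le hx.le, one_mul]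

theorem ENNReal.two_mul_one_div_four : (2 : ℝ≥0∞) * (1 / 4) = 2⁻¹ := by
  rw [one_div, show (4 : ℝ≥0∞) = 2 * 2 by norm_num, ENNReal.mul_inv (by simp) (by simp),
    ← mul_assoc, ENNReal.mul_inv_cancel (by simp) (by simp), one_mul]

theorem ENNReal.inv_two_le_one_sub {x : ℝ≥0∞} (hx : x ≤ 2⁻¹) : 2⁻¹ ≤ 1 - x :=
  calc 2⁻¹ = 1 - 2⁻¹ := ENNReal.one_sub_inv_two.symm
    _ ≤ 1 - x := tsub_le_tsub_left hx 1

section Neighborhoods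

variable [Fintype β] {dep : β → β → Prop}

theorem mem_nbhd {A B : β} : A ∈ nbhd dep B ↔ A ≠ B ∧ dep A B := by
  simp [nbhd]

theorem mem_nbhd_comm (hsym : ∀ A B, dep A B → dep B A) {A B : β} :
    A ∈ nbhd dep B ↔ B ∈ nbhd dep A := by
  simp only [mem_nbhd, ne_comm]
  exact and_congr_right fun _ => ⟨hsym _ _, hsym _ _⟩

theorem self_not_mem_nbhd (B : β) : B ∉ nbhd dep B := by
  simp [nbhd]

theorem inclNbhd_eq_insert (B : β) : inclNbhd dep B = insert B (nbhd dep B) := by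
  ext A
  simp only [inclNbhd, nbhd, Finset.mem_filter, Finset.mem_univ, true_and, Finset.mem_insert]
  tauto

theorem mem_stab {I J : Finset β} :
    J ∈ stab dep I ↔ IsStable dep J ∧ J ⊆ I.biUnion (inclNbhd dep) := by
  simp [stab]

theorem eq_empty_of_mem_stab_empty {J : Finset β} (h : J ∈ stab dep ∅) : J = ∅ := by
  simpa using (mem_stab.mp h).2

theorem sum_stab_prod_le (c : β → ℝ≥0∞) (I : Finset β) :
    ∑ J ∈ stab dep I, ∏ A ∈ J, c A ≤ ∏ B ∈ I, ∏ A ∈ inclNbhd dep B, (c A + 1) :=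
  calc ∑ J ∈ stab dep I, ∏ A ∈ J, c A
      ≤ ∑ J ∈ (I.biUnion (inclNbhd dep)).powerset, ∏ A ∈ J, c A :=
        Finset.sum_le_sum_of_subset fun _ hJ => Finset.mem_powerset.mpr (mem_stab.mp hJ).2
    _ = ∏ A ∈ I.biUnion (inclNbhd dep), (c A + 1) := (Finset.prod_add_one _).symm
    _ ≤ _ := Finset.prod_biUnion_le_of_one_le (fun _ => le_add_self) _ _

end Neighborhoods

namespace StableSeq

variable [Fintype β] {dep : β → β → Prop} {I : Finset β}

theorem ext {S T : StableSeq dep I} (h : S.seq = T.seq) : S = T := by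
  cases S; cases T; simpa using h

theorem seq_succ_eq_empty (S : StableSeq dep I) {i : ℕ} (h : S.seq i = ∅) :
    S.seq (i + 1) = ∅ :=
  eq_empty_of_mem_stab_empty (h ▸ S.step i)

theorem seq_eq_empty_of_root_empty (S : StableSeq dep ∅) (i : ℕ) : S.seq i = ∅ := by
  induction i with
  | zero => exact S.root
  | succ i ih => exact S.seq_succ_eq_empty ih

theorem weight_of_root_empty (p : β → ℝ≥0∞) (S : StableSeq dep ∅) : S.weight p = 1 := by
  have h : S.depth = 0 := (Nat.find_eq_zero _).mpr S.root
  simp [weight, h]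

theorem depth_le (S : StableSeq dep I) {n : ℕ} (h : S.seq n = ∅) : S.depth ≤ n :=
  Nat.find_le h

theorem seq_depth (S : StableSeq dep I) : S.seq S.depth = ∅ :=
  Nat.find_spec S.fin

theorem depth_pos (hI : I.Nonempty) (S : StableSeq dep I) : 0 < S.depth := by
  refine Nat.pos_of_ne_zero fun h => hI.ne_empty ?_
  rw [← S.root, ← h, S.seq_depth]

def tail (S : StableSeq dep I) : StableSeq dep (S.seq 1) where
  seq i := S.seq (i + 1)
  root := rfl
  stable i := S.stable (i + 1)
  step i := S.step (i + 1)
  fin := S.fin.imp fun _ => S.seq_succ_eq_empty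

theorem seq_one_mem_stab (S : StableSeq dep I) : S.seq 1 ∈ stab dep I :=
  by simpa only [S.root] using S.step 0

theorem depth_tail (hI : I.Nonempty) (S : StableSeq dep I) : S.tail.depth + 1 = S.depth := by
  have hpos := S.depth_pos hI
  have hle : S.tail.depth ≤ S.depth - 1 := S.tail.depth_le <| by
    change S.seq (S.depth - 1 + 1) = ∅
    rw [Nat.sub_add_cancel hpos, S.seq_depth]
  have hge : S.depth ≤ S.tail.depth + 1 := S.depth_le S.tail.seq_depth
  omega

theorem weight_eq_mul_weight_tail (p : β → ℝ≥0∞) (hI : I.Nonempty) (S : StableSeq dep I) :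
    S.weight p = (∏ B ∈ I, p B) * S.tail.weight p := by
  rw [weight, ← S.depth_tail hI, Finset.prod_range_succ', S.root, mul_comm]
  rfl

end StableSeq

section Shearer

variable [Fintype β] {dep : β → β → Prop} {p : β → ℝ≥0∞}

theorem muD_empty_le_one (h : ℕ) : muD dep p ∅ h ≤ 1 := by
  rcases isEmpty_or_nonempty {S : StableSeq dep ∅ // S.depth ≤ h} with _ | hne
  · simp [muD]
  · obtain ⟨S₀⟩ := hne
    have hsub (S : {S : StableSeq dep ∅ // S.depth ≤ h}) : S = S₀ :=
      Subtype.ext <| StableSeq.ext <| funext fun i => by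
        rw [S.1.seq_eq_empty_of_root_empty, S₀.1.seq_eq_empty_of_root_empty]
    rw [muD, tsum_eq_single S₀ fun S hS => absurd (hsub S) hS, S₀.1.weight_of_root_empty]

theorem muD_zero_of_nonempty {I : Finset β} (hI : I.Nonempty) : muD dep p I 0 = 0 := by
  have : IsEmpty {S : StableSeq dep I // S.depth ≤ 0} :=
    ⟨fun S => (S.1.depth_pos hI).ne' (Nat.le_zero.mp S.2)⟩
  simp [muD]

theorem muD_succ_le {I : Finset β} (hI : I.Nonempty) (h : ℕ) :
    muD dep p I (h + 1) ≤ (∏ B ∈ I, p B) * ∑ J ∈ stab dep I, muD dep p J h := by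
  let tailMap : {S : StableSeq dep I // S.depth ≤ h + 1} →
      (J : stab dep I) × {T : StableSeq dep J // T.depth ≤ h} := fun S =>
    ⟨⟨S.1.seq 1, S.1.seq_one_mem_stab⟩, S.1.tail, by have := S.1.depth_tail hI; omega⟩
  have tailMap_injective : Function.Injective tailMap := by
    rintro ⟨S, _⟩ ⟨T, _⟩ hST
    refine Subtype.ext <| StableSeq.ext <| funext fun i => ?_
    cases i with
    | zero => rw [S.root, T.root]
    | succ i => exact congrFun (congrArg (fun x => x.2.1.seq) hST) i
  calc muD dep p I (h + 1)
      = ∑' S, (∏ B ∈ I, p B) * (tailMap S).2.1.weight p :=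
        tsum_congr fun S => S.1.weight_eq_mul_weight_tail p hI
    _ ≤ ∑' x : (J : stab dep I) × {T : StableSeq dep J // T.depth ≤ h},
          (∏ B ∈ I, p B) * x.2.1.weight p :=
        ENNReal.tsum_comp_le_tsum_of_injective tailMap_injective _
    _ = (∏ B ∈ I, p B) * ∑' J : stab dep I, muD dep p J h := by
        simp only [ENNReal.tsum_sigma', ENNReal.tsum_mul_left, muD]
    _ = _ := congrArg _ (Finset.tsum_subtype (stab dep I) fun J => muD dep p J h)

theorem muD_le_prod {c : β → ℝ≥0∞} (hc : ∀ B, p B * ∏ A ∈ inclNbhd dep B, (c A + 1) ≤ c B)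
    (h : ℕ) (I : Finset β) : muD dep p I h ≤ ∏ B ∈ I, c B := by
  induction h generalizing I with
  | zero =>
    rcases I.eq_empty_or_nonempty with rfl | hI
    · simpa using muD_empty_le_one 0
    · simp [muD_zero_of_nonempty hI]
  | succ h ih =>
    rcases I.eq_empty_or_nonempty with rfl | hI
    · simpa using muD_empty_le_one (h + 1)
    calc muD dep p I (h + 1) ≤ (∏ B ∈ I, p B) * ∑ J ∈ stab dep I, muD dep p J h :=
          muD_succ_le hI h
      _ ≤ (∏ B ∈ I, p B) * ∏ B ∈ I, ∏ A ∈ inclNbhd dep B, (c A + 1) := by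
          gcongr
          exact (Finset.sum_le_sum fun J _ => ih J).trans (sum_stab_prod_le c I)
      _ = ∏ B ∈ I, p B * ∏ A ∈ inclNbhd dep B, (c A + 1) := Finset.prod_mul_distrib.symm
      _ ≤ ∏ B ∈ I, c B := Finset.prod_le_prod' fun B _ => hc B

theorem mu_le_of_forall_muD_le {I : Finset β} {C : ℝ≥0∞} (hC : ∀ h, muD dep p I h ≤ C) :
    mu dep p I ≤ C := by
  rw [mu, ENNReal.tsum_eq_iSup_sum]
  refine iSup_le fun F => ?_
  let h := F.sup StableSeq.depth
  calc ∑ S ∈ F, S.weight p = ∑ S ∈ F.subtype (·.depth ≤ h), S.1.weight p :=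
        (Finset.sum_subtype_of_mem _ fun _ hS => Finset.le_sup hS).symm
    _ ≤ muD dep p I h := ENNReal.sum_le_tsum _
    _ ≤ C := hC h

theorem mu_le_prod {c : β → ℝ≥0∞} (hc : ∀ B, p B * ∏ A ∈ inclNbhd dep B, (c A + 1) ≤ c B)
    (I : Finset β) : mu dep p I ≤ ∏ B ∈ I, c B :=
  mu_le_of_forall_muD_le fun h => muD_le_prod hc h I

theorem alphaB_le_prod {c : β → ℝ≥0∞} (hc : ∀ B, p B * ∏ A ∈ inclNbhd dep B, (c A + 1) ≤ c B)
    (B : β) : alphaB dep p B ≤ ∏ A ∈ inclNbhd dep B, (c A + 1) :=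
  calc alphaB dep p B ≤ ∑ J ∈ stab dep {B}, ∏ A ∈ J, c A :=
        Finset.sum_le_sum fun J _ => mu_le_prod hc J
    _ ≤ _ := by simpa using sum_stab_prod_le c {B}

theorem prod_inclNbhd_odds_add_one {x : β → ℝ≥0∞} (hx : ∀ B, x B < 1) (B : β) :
    ∏ A ∈ inclNbhd dep B, (x A * (1 - x A)⁻¹ + 1) =
      (1 - x B)⁻¹ * (∏ A ∈ nbhd dep B, (1 - x A))⁻¹ := by
  have hne_top : ∀ A, 1 - x A ≠ ⊤ := fun A => (tsub_le_self.trans_lt ENNReal.one_lt_top).ne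
  rw [inclNbhd_eq_insert, Finset.prod_insert (self_not_mem_nbhd B),
    ENNReal.prod_inv_distrib fun _ _ A _ _ => Or.inr (hne_top A)]
  simp only [ENNReal.mul_inv_one_sub_add_one (hx _)]

theorem mul_prod_inclNbhd_odds_add_one_le {x : β → ℝ≥0∞} (hx : ∀ B, x B < 1)
    (hp : ∀ B, p B ≤ x B * ∏ A ∈ nbhd dep B, (1 - x A)) (B : β) :
    p B * ∏ A ∈ inclNbhd dep B, (x A * (1 - x A)⁻¹ + 1) ≤ x B * (1 - x B)⁻¹ := by
  rw [prod_inclNbhd_odds_add_one hx, mul_left_comm, mul_comm (x B)]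
  gcongr
  exact ENNReal.div_le_of_le_mul (hp B)

theorem mu_le_prod_of_asymmetric {x : β → ℝ≥0∞} (hx : ∀ B, x B < 1)
    (hp : ∀ B, p B ≤ x B * ∏ A ∈ nbhd dep B, (1 - x A)) (I : Finset β) :
    mu dep p I ≤ ∏ B ∈ I, x B * (1 - x B)⁻¹ :=
  mu_le_prod (mul_prod_inclNbhd_odds_add_one_le hx hp) I

theorem alphaB_le_of_asymmetric {x : β → ℝ≥0∞} (hx : ∀ B, x B < 1)
    (hp : ∀ B, p B ≤ x B * ∏ A ∈ nbhd dep B, (1 - x A)) (B : β) :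
    alphaB dep p B ≤ (1 - x B)⁻¹ * (∏ A ∈ nbhd dep B, (1 - x A))⁻¹ :=
  prod_inclNbhd_odds_add_one (dep := dep) hx B ▸
    alphaB_le_prod (mul_prod_inclNbhd_odds_add_one_le hx hp) B

end Shearer

/-- if p_max < 1 and Σ_{A ∈ Γ(B)} p(A) ≤ 1/4 for all B, then the
Shearer criterion holds and α(B) ≤ 4 for every non-isolated B. -/
theorem quarter_criterion_implies_Shearer [Fintype β] (dep : β → β → Prop)
    (hsym : Symmetric dep) (p : β → ℝ≥0∞) (pmax : ℝ≥0∞)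
    (hp : ∀ B, p B ≤ pmax) (hpmax : pmax < 1)
    (hcrit : ∀ B : β, ∑ A ∈ nbhd dep B, p A ≤ 1 / 4) :
    ShearerCrit dep p ∧
      ∀ B : β, (nbhd dep B).Nonempty → alphaB dep p B ≤ 4 := by
  set x : β → ℝ≥0∞ := fun B => if (nbhd dep B).Nonempty then 2 * p B else p B
  have hsum (B : β) : ∑ A ∈ nbhd dep B, x A ≤ 2⁻¹ :=
    calc ∑ A ∈ nbhd dep B, x A = 2 * ∑ A ∈ nbhd dep B, p A := by
          rw [Finset.mul_sum]
          exact Finset.sum_congr rfl fun A hA => if_pos ⟨B, (mem_nbhd_comm hsym).mp hA⟩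
      _ ≤ 2 * (1 / 4) := by gcongr; exact hcrit B
      _ = 2⁻¹ := ENNReal.two_mul_one_div_four
  have hx_half (B : β) (hB : (nbhd dep B).Nonempty) : x B ≤ 2⁻¹ := by
    obtain ⟨A, hA⟩ := hB
    exact (Finset.single_le_sum (fun _ _ => zero_le) ((mem_nbhd_comm hsym).mp hA)).trans
      (hsum A)
  have hx_lt_one (B : β) : x B < 1 := by
    by_cases hB : (nbhd dep B).Nonempty
    · exact (hx_half B hB).trans_lt (ENNReal.inv_lt_one.mpr (by norm_num))
    · simpa [x, hB] using (hp B).trans_lt hpmax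
  have hprod (B : β) : 2⁻¹ ≤ ∏ A ∈ nbhd dep B, (1 - x A) :=
    (ENNReal.inv_two_le_one_sub (hsum B)).trans
      (ENNReal.one_sub_sum_le_prod_one_sub _ fun A _ => (hx_lt_one A).le)
  have hasym (B : β) : p B ≤ x B * ∏ A ∈ nbhd dep B, (1 - x A) := by
    by_cases hB : (nbhd dep B).Nonempty
    · calc p B = 2 * p B * 2⁻¹ := by
            rw [mul_comm 2, mul_assoc, ENNReal.mul_inv_cancel two_ne_zero ENNReal.ofNat_ne_top,
              mul_one]
        _ ≤ x B * ∏ A ∈ nbhd dep B, (1 - x A) := by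
            rw [show x B = 2 * p B from if_pos hB]; gcongr; exact hprod B
    · simp [x, Finset.not_nonempty_iff_eq_empty.mp hB]
  refine ⟨fun B => ?_, fun B hB => ?_⟩
  · calc mu dep p {B} ≤ x B * (1 - x B)⁻¹ := by
          simpa using mu_le_prod_of_asymmetric hx_lt_one hasym {B}
      _ < ⊤ := ENNReal.mul_lt_top ((hx_lt_one B).trans ENNReal.one_lt_top)
          (ENNReal.inv_lt_top.mpr (tsub_pos_of_lt (hx_lt_one B)))
  · calc alphaB dep p B ≤ (1 - x B)⁻¹ * (∏ A ∈ nbhd dep B, (1 - x A))⁻¹ :=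
          alphaB_le_of_asymmetric hx_lt_one hasym B
      _ ≤ 2 * 2 := by
          gcongr <;> rw [ENNReal.inv_le_iff_inv_le]
          exacts [ENNReal.inv_two_le_one_sub (hx_half B hB), hprod B]
      _ = 4 := by norm_num
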